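/- For a prime p, the set consisting of the p dihedral subgroups ⟨r^p, s r^i⟩ (1 ≤ i ≤ p) together with ⟨r⟩ and ⟨r^p⟩ induces a complete subgraph of the intersection graph of D_{2p^2}; moreover it is the unique maximum clique, so the clique number of this graph is p + 2. -/

import Mathlib

open DihedralGroup Subgroup

/-- The intersection graph of a group: vertices are the proper non-trivial
subgroups, two distinct subgroups are adjacent iff their intersection is
non-trivial. -/
def interGraph (G : Type*) [Group G] :
    SimpleGraph {H : Subgroup G // H ≠ ⊥ ∧ H ≠ ⊤} where
  Adj H K := H ≠ K ∧ H.1 ⊓ K.1 ≠ ⊥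
  symm := ⟨fun H K h => ⟨h.1.symm, by rw [inf_comm]; exact h.2⟩⟩
  loopless := ⟨fun H h => h.1 rfl⟩

/-- The vertex type of the intersection graph of `DihedralGroup n`. -/
abbrev Vert (n : ℕ) := {H : Subgroup (DihedralGroup n) // H ≠ ⊥ ∧ H ≠ ⊤}

/-- The degree of a vertex in the intersection graph of `DihedralGroup n`. -/
noncomputable def deg (n : ℕ) (v : Vert n) : ℕ :=
  Nat.card ((interGraph (DihedralGroup n)).neighborSet v)

/-- The eccentricity of a vertex in the intersection graph of `DihedralGroup n`. -/
noncomputable def ecc (n : ℕ) (v : Vert n) : ℕ :=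
  sSup (Set.range fun u => (interGraph (DihedralGroup n)).dist v u)

namespace Stmt8Aux
variable {n : ℕ}

@[simp] lemma r_inv (a : ZMod n) : (r a)⁻¹ = r (-a) := rfl
@[simp] lemma sr_inv (a : ZMod n) : (sr a)⁻¹ = sr a := rfl

lemma r_pow (c : ZMod n) (k : ℕ) : (r c) ^ k = r (k • c) := by
  induction k with
  | zero => simp [-r_zero, one_def]
  | succ k ih => rw [pow_succ, ih, r_mul_r, succ_nsmul]

lemma r_zpow (c : ZMod n) (k : ℤ) : (r c) ^ k = r (k • c) := by
  cases k with
  | ofNat k => simpa using r_pow c k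
  | negSucc k => rw [zpow_negSucc, r_pow, r_inv]; congr 1; rw [zsmul_eq_mul]; push_cast [Int.negSucc_eq]; ring

def dihMem (A : AddSubgroup (ZMod n)) (i : ZMod n) : DihedralGroup n → Prop
  | r a => a ∈ A
  | sr b => b - i ∈ A

def dihSub (A : AddSubgroup (ZMod n)) (i : ZMod n) : Subgroup (DihedralGroup n) where
  carrier := setOf (dihMem A i)
  one_mem' := by show dihMem A i (r 0); exact A.zero_mem
  mul_mem' := by
    rintro (a | a) (b | b) ha hb
    · exact A.add_mem ha hb
    · show (b - a) - i ∈ A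
      have := A.sub_mem hb ha; rwa [sub_right_comm] at this
    · show (a + b) - i ∈ A
      have := A.add_mem ha hb; rwa [sub_add_eq_add_sub] at this
    · show (b - a) ∈ A
      have := A.sub_mem hb ha; rwa [sub_sub_sub_cancel_right] at this
  inv_mem' := by
    rintro (a | a) ha
    · exact A.neg_mem ha
    · exact ha

@[simp] lemma mem_dihSub_r {A : AddSubgroup (ZMod n)} {i a : ZMod n} :
    r a ∈ dihSub A i ↔ a ∈ A := Iff.rfl
@[simp] lemma mem_dihSub_sr {A : AddSubgroup (ZMod n)} {i b : ZMod n} :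
    sr b ∈ dihSub A i ↔ b - i ∈ A := Iff.rfl

lemma mem_zpowers_r {c : ZMod n} {x : DihedralGroup n} :
    x ∈ zpowers (r c) ↔ ∃ k : ℤ, x = r (k • c) := by
  rw [mem_zpowers_iff]
  constructor
  · rintro ⟨k, rfl⟩; exact ⟨k, r_zpow c k⟩
  · rintro ⟨k, rfl⟩; exact ⟨k, r_zpow c k⟩

lemma sr_not_mem_zpowers_r (c b : ZMod n) : sr b ∉ zpowers (r c) := by
  rw [mem_zpowers_r]; rintro ⟨k, hk⟩; exact absurd hk (by simp)

lemma mem_zpowers_sr {j : ZMod n} {x : DihedralGroup n} :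
    x ∈ zpowers (sr j) ↔ x = 1 ∨ x = sr j := by
  constructor
  · rintro ⟨k, rfl⟩
    have h2 : ((sr j : DihedralGroup n) ^ (2:ℤ)) = 1 := by
      have : ((sr j : DihedralGroup n) ^ (2:ℤ)) = sr j * sr j := by
        rw [show (2:ℤ) = 1 + 1 by ring, zpow_add, zpow_one]
      rw [this, sr_mul_self]
    rcases Int.even_or_odd k with ⟨m, rfl⟩ | ⟨m, rfl⟩
    · left
      show (sr j : DihedralGroup n) ^ (m + m) = 1
      rw [show (m + m : ℤ) = 2 * m by ring, zpow_mul, h2, one_zpow]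
    · right
      show (sr j : DihedralGroup n) ^ (2 * m + 1) = sr j
      rw [zpow_add, zpow_mul, h2, one_zpow, one_mul, zpow_one]
  · rintro (rfl | rfl)
    · exact one_mem _
    · exact mem_zpowers _



section P

variable {p : ℕ} (hp : p.Prime)

lemma p_lt_sq (hp : p.Prime) : p < p ^ 2 := by nlinarith [hp.two_le]
lemma one_lt_sq (hp : p.Prime) : 1 < p ^ 2 := by nlinarith [hp.two_le]

lemma val_p (hp : p.Prime) : ((p : ZMod (p ^ 2))).val = p := by
  haveI : NeZero (p ^ 2) := ⟨(Nat.pos_of_ne_zero (by nlinarith [hp.two_le] : ¬ p^2 = 0)).ne'⟩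
  rw [ZMod.val_natCast, Nat.mod_eq_of_lt (p_lt_sq hp)]

lemma memP_iff (hp : p.Prime) (a : ZMod (p ^ 2)) :
    a ∈ AddSubgroup.zmultiples ((p : ℕ) : ZMod (p ^ 2)) ↔ p ∣ a.val := by
  haveI : NeZero (p ^ 2) := ⟨(Nat.pos_of_ne_zero (by nlinarith [hp.two_le] : ¬ p^2 = 0)).ne'⟩
  constructor
  · rintro ⟨k, rfl⟩
    show p ∣ (k • ((p:ℕ) : ZMod (p^2))).val
    rw [zsmul_eq_mul, ZMod.val_mul]
    refine (Nat.dvd_mod_iff (dvd_pow_self p two_ne_zero)).2 ?_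
    exact Dvd.dvd.mul_left ⟨1, by rw [val_p hp, mul_one]⟩ _
  · rintro ⟨m, hm⟩
    refine ⟨(m : ℤ), ?_⟩
    have : ((a.val : ℕ) : ZMod (p ^ 2)) = a := ZMod.natCast_rightInverse a
    rw [← this, hm]
    show ((m:ℤ) • ((p:ℕ) : ZMod (p^2))) = ((p * m : ℕ) : ZMod (p^2))
    rw [zsmul_eq_mul]
    push_cast
    ring

lemma tri (hp : p.Prime) (A : AddSubgroup (ZMod (p ^ 2))) :
    A = ⊥ ∨ A = AddSubgroup.zmultiples ((p : ℕ) : ZMod (p ^ 2)) ∨ A = ⊤ := by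
  haveI : NeZero (p ^ 2) := ⟨(Nat.pos_of_ne_zero (by nlinarith [hp.two_le] : ¬ p^2 = 0)).ne'⟩
  by_cases hA : ∀ a ∈ A, p ∣ a.val
  · by_cases hbot : A = ⊥
    · exact Or.inl hbot
    right; left
    obtain ⟨a, haA, ha0⟩ : ∃ a ∈ A, a ≠ 0 := by
      by_contra h; push_neg at h
      exact hbot (by rw [eq_bot_iff]; intro x hx; exact (h x hx))
    obtain ⟨m, hm⟩ := hA a haA
    have hval_lt : a.val < p ^ 2 := ZMod.val_lt a
    have hmlt : m < p := by nlinarith [hp.two_le]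
    have hm0 : m ≠ 0 := by
      rintro rfl; rw [mul_zero] at hm; exact ha0 ((ZMod.val_eq_zero a).1 hm)
    haveI : Fact p.Prime := ⟨hp⟩
    have hmz : (m : ZMod p) ≠ 0 := by
      rw [Ne, ZMod.natCast_eq_zero_iff]
      intro h
      exact hm0 (Nat.eq_zero_of_dvd_of_lt h hmlt)
    set k := ((m : ZMod p)⁻¹).val with hk
    have hmk : ((m * k : ℕ) : ZMod p) = ((1:ℕ) : ZMod p) := by
      push_cast
      rw [ZMod.natCast_val, ZMod.cast_id]
      field_simp
    have hmod : (m * k) % p = 1 % p := (ZMod.natCast_eq_natCast_iff _ _ _).1 hmk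
    have h1p : 1 % p = 1 := Nat.mod_eq_of_lt hp.one_lt
    obtain ⟨t, ht⟩ : ∃ t, m * k = p * t + 1 :=
      ⟨m*k/p, by conv_lhs => rw [← Nat.div_add_mod (m*k) p, hmod, h1p]⟩
    apply le_antisymm
    · intro x hx; exact (memP_iff hp x).2 (hA x hx)
    · have key : ((k*(p*m) : ℕ) : ZMod (p^2)) = ((p:ℕ) : ZMod (p^2)) := by
        rw [show k*(p*m) = p^2*t+p from by rw [show k*(p*m) = p*(m*k) from by ring, ht]; ring]
        rw [Nat.cast_add, Nat.cast_mul, ZMod.natCast_self, zero_mul, zero_add]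
      have hpA : ((p:ℕ) : ZMod (p^2)) ∈ A := by
        have h2 : (k • a : ZMod (p^2)) = ((p:ℕ) : ZMod (p^2)) := by
          rw [nsmul_eq_mul, ← key]
          rw [show a = ((p * m : ℕ) : ZMod (p^2)) from by
            rw [← hm]; exact (ZMod.natCast_rightInverse a).symm]
          push_cast; ring
        exact h2 ▸ A.nsmul_mem haA k
      intro x hx
      obtain ⟨c, hc⟩ := AddSubgroup.mem_zmultiples_iff.1 hx
      rw [← hc]; exact A.zsmul_mem hpA c
  · push_neg at hA
    obtain ⟨a, haA, hnd⟩ := hA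
    right; right
    have hcop : Nat.Coprime (a.val) (p^2) :=
      (Nat.coprime_comm.1 (hp.coprime_iff_not_dvd.2 hnd)).pow_right 2
    have hu : IsUnit a := by
      rw [← ZMod.natCast_rightInverse a]
      exact (ZMod.isUnit_iff_coprime a.val (p^2)).2 hcop
    obtain ⟨b, hb⟩ := hu.exists_left_inv
    rw [eq_top_iff]; intro c _
    have h2 : ((c*b).val) • a = c := by
      rw [nsmul_eq_mul, ZMod.natCast_rightInverse (c*b), mul_assoc, hb, mul_one]
    exact h2 ▸ A.nsmul_mem haA _





def rotA (H : Subgroup (DihedralGroup n)) : AddSubgroup (ZMod n) where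
  carrier := {a | r a ∈ H}
  zero_mem' := by show r 0 ∈ H; rw [← one_def]; exact H.one_mem
  add_mem' := by
    intro a b ha hb
    have := H.mul_mem ha hb; rwa [r_mul_r] at this
  neg_mem' := by
    intro a ha
    have := H.inv_mem ha; rwa [r_inv] at this

@[simp] lemma mem_rotA {H : Subgroup (DihedralGroup n)} {a : ZMod n} :
    a ∈ rotA H ↔ r a ∈ H := Iff.rfl

lemma closure_eq_dihSub (c i : ZMod n) :
    closure {r c, sr i} = dihSub (AddSubgroup.zmultiples c) i := by
  apply le_antisymm
  · rw [closure_le]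
    rintro x (rfl | rfl)
    · exact AddSubgroup.mem_zmultiples c
    · simp only [SetLike.mem_coe, mem_dihSub_sr, sub_self]; exact zero_mem _
  · intro x hx
    have hrc : (r c : DihedralGroup n) ∈ closure {r c, sr i} :=
      subset_closure (Set.mem_insert _ _)
    have hsri : (sr i : DihedralGroup n) ∈ closure {r c, sr i} :=
      subset_closure (Set.mem_insert_of_mem _ rfl)
    cases x with
    | r a =>
      obtain ⟨k, hk⟩ := AddSubgroup.mem_zmultiples_iff.1 hx
      rw [show (r a : DihedralGroup n) = (r c) ^ k from by rw [r_zpow, hk]]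
      exact zpow_mem hrc k
    | sr b =>
      obtain ⟨k, hk⟩ := AddSubgroup.mem_zmultiples_iff.1 hx
      rw [show (sr b : DihedralGroup n) = sr i * (r c) ^ k from by
        rw [r_zpow, hk, sr_mul_r, add_sub_cancel]]
      exact mul_mem hsri (zpow_mem hrc k)

lemma dihSub_eq_iff {A : AddSubgroup (ZMod n)} {i j : ZMod n} :
    dihSub A i = dihSub A j ↔ i - j ∈ A := by
  constructor
  · intro h
    have : sr i ∈ dihSub A i := by rw [mem_dihSub_sr, sub_self]; exact zero_mem _
    rw [h, mem_dihSub_sr] at this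
    exact this
  · intro h
    ext x
    cases x with
    | r a => rfl
    | sr b =>
      rw [mem_dihSub_sr, mem_dihSub_sr]
      constructor
      · intro hb; have := A.add_mem hb h; rwa [sub_add_sub_cancel] at this
      · intro hb; have := A.sub_mem hb h
        rwa [sub_sub_sub_cancel_right] at this

lemma classify {p : ℕ} (hp : p.Prime) (H : Subgroup (DihedralGroup (p ^ 2)))
    (h1 : H ≠ ⊥) (h2 : H ≠ ⊤) :
    H = zpowers (r (1 : ZMod (p ^ 2))) ∨
    H = zpowers (r ((p : ℕ) : ZMod (p ^ 2))) ∨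
    (∃ j, H = dihSub (AddSubgroup.zmultiples ((p : ℕ) : ZMod (p ^ 2))) j) ∨
    (∃ j, H = zpowers (sr j)) := by
  by_cases hsr : ∃ j, sr j ∈ H
  · obtain ⟨j, hj⟩ := hsr
    have hHeq : H = dihSub (rotA H) j := by
      ext x
      cases x with
      | r a => rfl
      | sr b =>
        rw [mem_dihSub_sr, mem_rotA]
        constructor
        · intro hb
          have := H.mul_mem hj hb; rwa [sr_mul_sr] at this
        · intro hb
          have := H.mul_mem hj hb
          rwa [sr_mul_r, add_sub_cancel] at this
    rcases tri hp (rotA H) with hA | hA | hA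
    · right; right; right
      refine ⟨j, ?_⟩
      rw [hHeq, hA]
      ext x
      cases x with
      | r a =>
        rw [mem_dihSub_r, AddSubgroup.mem_bot, mem_zpowers_sr]
        simp [-r_zero, one_def]
      | sr b =>
        rw [mem_dihSub_sr, AddSubgroup.mem_bot, mem_zpowers_sr, sub_eq_zero]
        simp [-r_zero, one_def]
    · right; right; left; exact ⟨j, by rw [hHeq, hA]⟩
    · exfalso; apply h2
      rw [eq_top_iff]; intro x _
      rw [hHeq]
      cases x with
      | r a => rw [mem_dihSub_r, hA]; trivial
      | sr b => rw [mem_dihSub_sr, hA]; trivial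
  · push_neg at hsr
    rcases tri hp (rotA H) with hA | hA | hA
    · exfalso; apply h1
      rw [eq_bot_iff]; intro x hx
      cases x with
      | r a =>
        have : a ∈ rotA H := hx
        rw [hA, AddSubgroup.mem_bot] at this
        rw [this, mem_bot, ← one_def]
      | sr b => exact absurd hx (hsr b)
    · right; left
      ext x
      cases x with
      | r a =>
        rw [mem_zpowers_r]
        have : (r a ∈ H) ↔ a ∈ rotA H := Iff.rfl
        rw [this, hA]
        constructor
        · intro h; obtain ⟨k, hk⟩ := AddSubgroup.mem_zmultiples_iff.1 h
          exact ⟨k, by rw [hk]⟩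
        · rintro ⟨k, hk⟩
          have : a = k • ((p:ℕ) : ZMod (p^2)) := by
            have := hk; injection this
          exact AddSubgroup.mem_zmultiples_iff.2 ⟨k, this.symm⟩
      | sr b =>
        constructor
        · intro h; exact absurd h (hsr b)
        · intro h; exact absurd h (sr_not_mem_zpowers_r _ b)
    · left
      ext x
      cases x with
      | r a =>
        constructor
        · intro _
          refine mem_zpowers_r.2 ⟨(a.val : ℤ), ?_⟩
          congr 1
          haveI : NeZero (p ^ 2) := ⟨(Nat.pos_of_ne_zero (by nlinarith [hp.two_le] : ¬ p^2 = 0)).ne'⟩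
          rw [zsmul_eq_mul, mul_one]
          push_cast
          exact (ZMod.natCast_rightInverse a).symm
        · intro _
          show a ∈ rotA H
          rw [hA]; trivial
      | sr b =>
        constructor
        · intro h; exact absurd h (hsr b)
        · intro h; exact absurd h (sr_not_mem_zpowers_r _ b)

end P

section Verts
variable {p : ℕ}

lemma sq_pos (hp : p.Prime) : NeZero (p ^ 2) :=
  ⟨(Nat.pos_of_ne_zero (by nlinarith [hp.two_le] : ¬ p^2 = 0)).ne'⟩

lemma p_ne_zero' (hp : p.Prime) : ((p : ℕ) : ZMod (p ^ 2)) ≠ 0 := by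
  haveI := sq_pos hp
  intro h
  have h2 := val_p hp
  rw [h, ZMod.val_zero] at h2
  exact hp.pos.ne h2

lemma rp_ne_one (hp : p.Prime) :
    (r ((p : ℕ) : ZMod (p ^ 2)) : DihedralGroup (p ^ 2)) ≠ 1 := by
  rw [one_def]
  simp only [ne_eq, r.injEq]
  exact p_ne_zero' hp

lemma one_not_memP (hp : p.Prime) :
    (1 : ZMod (p ^ 2)) ∉ AddSubgroup.zmultiples ((p : ℕ) : ZMod (p ^ 2)) := by
  haveI : Fact (1 < p ^ 2) := ⟨one_lt_sq hp⟩
  rw [memP_iff hp, ZMod.val_one]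
  intro h
  exact absurd (Nat.le_of_dvd one_pos h) (by have := hp.two_le; omega)

lemma one_ne_zero' (hp : p.Prime) : (1 : ZMod (p ^ 2)) ≠ 0 := by
  haveI : Fact (1 < p ^ 2) := ⟨one_lt_sq hp⟩
  exact one_ne_zero

lemma dihSub_ne_bot (hp : p.Prime) (j : ZMod (p ^ 2)) :
    dihSub (AddSubgroup.zmultiples ((p : ℕ) : ZMod (p ^ 2))) j ≠ ⊥ := by
  intro h
  have : sr j ∈ dihSub (AddSubgroup.zmultiples ((p : ℕ) : ZMod (p ^ 2))) j := by
    rw [mem_dihSub_sr, sub_self]; exact zero_mem _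
  rw [h, mem_bot, one_def] at this
  exact absurd this (by simp [-r_zero])

lemma dihSub_ne_top (hp : p.Prime) (j : ZMod (p ^ 2)) :
    dihSub (AddSubgroup.zmultiples ((p : ℕ) : ZMod (p ^ 2))) j ≠ ⊤ := by
  intro h
  have : r (1 : ZMod (p ^ 2)) ∈ dihSub (AddSubgroup.zmultiples ((p : ℕ) : ZMod (p ^ 2))) j := by
    rw [h]; trivial
  exact one_not_memP hp this

lemma zpr1_ne_bot (hp : p.Prime) : zpowers (r (1 : ZMod (p ^ 2))) ≠ ⊥ := by
  intro h
  have : r (1 : ZMod (p ^ 2)) ∈ zpowers (r (1 : ZMod (p ^ 2))) := mem_zpowers _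
  rw [h, mem_bot, one_def] at this
  simp only [r.injEq] at this
  exact one_ne_zero' hp this

lemma zpr1_ne_top : zpowers (r (1 : ZMod (p ^ 2))) ≠ ⊤ := by
  intro h
  exact sr_not_mem_zpowers_r 1 0 (h ▸ mem_top _)

lemma zprp_ne_bot (hp : p.Prime) : zpowers (r ((p : ℕ) : ZMod (p ^ 2))) ≠ ⊥ := by
  intro h
  have : r ((p : ℕ) : ZMod (p ^ 2)) ∈ zpowers (r ((p : ℕ) : ZMod (p ^ 2))) := mem_zpowers _
  rw [h, mem_bot] at this
  exact rp_ne_one hp this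

lemma zprp_ne_top : zpowers (r ((p : ℕ) : ZMod (p ^ 2))) ≠ ⊤ := by
  intro h
  exact sr_not_mem_zpowers_r _ 0 (h ▸ mem_top _)

/-- vertex for the dihedral subgroup of order 2p -/
def vD (hp : p.Prime) (j : ZMod (p ^ 2)) : Vert (p ^ 2) :=
  ⟨dihSub (AddSubgroup.zmultiples ((p : ℕ) : ZMod (p ^ 2))) j,
    dihSub_ne_bot hp j, dihSub_ne_top hp j⟩

/-- vertex ⟨r⟩ -/
def v1 (hp : p.Prime) : Vert (p ^ 2) :=
  ⟨zpowers (r (1 : ZMod (p ^ 2))), zpr1_ne_bot hp, zpr1_ne_top⟩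

/-- vertex ⟨r^p⟩ -/
def v2 (hp : p.Prime) : Vert (p ^ 2) :=
  ⟨zpowers (r ((p : ℕ) : ZMod (p ^ 2))), zprp_ne_bot hp, zprp_ne_top⟩

lemma d1 (hp : p.Prime) :
    zpowers (r (1 : ZMod (p ^ 2))) ≠ zpowers (r ((p : ℕ) : ZMod (p ^ 2))) := by
  intro h
  have h1 : r (1 : ZMod (p ^ 2)) ∈ zpowers (r ((p : ℕ) : ZMod (p ^ 2))) := h ▸ mem_zpowers _
  obtain ⟨k, hk⟩ := mem_zpowers_r.1 h1
  simp only [r.injEq] at hk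
  exact one_not_memP hp (AddSubgroup.mem_zmultiples_iff.2 ⟨k, hk.symm⟩)

lemma d2 (hp : p.Prime) (j : ZMod (p ^ 2)) :
    zpowers (r (1 : ZMod (p ^ 2))) ≠ dihSub (AddSubgroup.zmultiples ((p : ℕ) : ZMod (p ^ 2))) j := by
  intro h
  have h1 : r (1 : ZMod (p ^ 2)) ∈ dihSub (AddSubgroup.zmultiples ((p : ℕ) : ZMod (p ^ 2))) j :=
    h ▸ mem_zpowers _
  exact one_not_memP hp h1

lemma d3 (j : ZMod (p ^ 2)) :
    zpowers (r ((p : ℕ) : ZMod (p ^ 2))) ≠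
      dihSub (AddSubgroup.zmultiples ((p : ℕ) : ZMod (p ^ 2))) j := by
  intro h
  have h1 : sr j ∈ dihSub (AddSubgroup.zmultiples ((p : ℕ) : ZMod (p ^ 2))) j := by
    rw [mem_dihSub_sr, sub_self]; exact zero_mem _
  exact sr_not_mem_zpowers_r _ j (h ▸ h1)

lemma rp_mem_zpr1 (hp : p.Prime) :
    r ((p : ℕ) : ZMod (p ^ 2)) ∈ zpowers (r (1 : ZMod (p ^ 2))) := by
  refine mem_zpowers_r.2 ⟨(p : ℤ), ?_⟩
  congr 1
  rw [zsmul_eq_mul, mul_one]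
  push_cast
  rfl

lemma nat_eq_of_sub_memP (hp : p.Prime) {i i' : ℕ} (hi1 : 1 ≤ i) (hi2 : i ≤ p)
    (hi1' : 1 ≤ i') (hi2' : i' ≤ p)
    (h : ((i : ZMod (p ^ 2)) - (i' : ℕ)) ∈ AddSubgroup.zmultiples ((p : ℕ) : ZMod (p ^ 2))) :
    i = i' := by
  haveI := sq_pos hp
  have key : ∀ a b : ℕ, b ≤ a → a ≤ p → 1 ≤ b →
      ((a : ZMod (p ^ 2)) - (b : ℕ)) ∈ AddSubgroup.zmultiples ((p : ℕ) : ZMod (p ^ 2)) →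
      a = b := by
    intro a b hba hap hb1 hmem
    have hcast : ((a : ZMod (p ^ 2)) - (b : ℕ)) = ((a - b : ℕ) : ZMod (p ^ 2)) := by
      rw [Nat.cast_sub hba]
    have hplt := p_lt_sq hp
    rw [hcast, memP_iff hp, ZMod.val_natCast,
      Nat.mod_eq_of_lt (by omega : a - b < p ^ 2)] at hmem
    have hlt : a - b < p := by omega
    have h0 : a - b = 0 := Nat.eq_zero_of_dvd_of_lt hmem hlt
    omega
  rcases le_total i' i with hle | hle
  · exact key i i' hle hi2 hi1' h
  · exact (key i' i hle hi2' hi1 (by have := AddSubgroup.neg_mem _ h; rwa [neg_sub] at this)).symm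

lemma exists_canonical (hp : p.Prime) (j : ZMod (p ^ 2)) :
    ∃ i : ℕ, 1 ≤ i ∧ i ≤ p ∧
      dihSub (AddSubgroup.zmultiples ((p : ℕ) : ZMod (p ^ 2))) j =
        closure {r ((p : ℕ) : ZMod (p ^ 2)), sr ((i : ℕ) : ZMod (p ^ 2))} := by
  haveI := sq_pos hp
  set i0 := j.val % p with hi0
  set q := j.val / p with hq
  have hsplit : p * q + i0 = j.val := Nat.div_add_mod j.val p
  have hjcast : ((j.val : ℕ) : ZMod (p ^ 2)) = j := ZMod.natCast_rightInverse j
  have main : ∀ i : ℕ, ((j : ZMod (p ^ 2)) - (i : ℕ)) ∈ AddSubgroup.zmultiples ((p : ℕ) : ZMod (p ^ 2)) →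
      dihSub (AddSubgroup.zmultiples ((p : ℕ) : ZMod (p ^ 2))) j =
        closure {r ((p : ℕ) : ZMod (p ^ 2)), sr ((i : ℕ) : ZMod (p ^ 2))} := by
    intro i hmem
    rw [closure_eq_dihSub]
    exact dihSub_eq_iff.2 hmem
  by_cases h0 : i0 = 0
  · refine ⟨p, hp.one_lt.le, le_refl p, main p ?_⟩
    refine AddSubgroup.mem_zmultiples_iff.2 ⟨(q : ℤ) - 1, ?_⟩
    rw [zsmul_eq_mul, ← hjcast, ← hsplit, h0]
    push_cast
    ring
  · refine ⟨i0, Nat.one_le_iff_ne_zero.2 h0, (Nat.mod_lt _ hp.pos).le, main i0 ?_⟩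
    refine AddSubgroup.mem_zmultiples_iff.2 ⟨(q : ℤ), ?_⟩
    rw [zsmul_eq_mul, ← hjcast, ← hsplit]
    push_cast
    ring

end Verts
end Stmt8Aux

open Stmt8Aux

theorem stmt8 (p : ℕ) (hp : p.Prime)
    (K : Set (Vert (p ^ 2)))
    (hK : K = {v | (∃ i : ℕ, 1 ≤ i ∧ i ≤ p ∧ v.1 = Subgroup.closure
        {DihedralGroup.r ((p : ℕ) : ZMod (p ^ 2)),
          DihedralGroup.sr ((i : ℕ) : ZMod (p ^ 2))}) ∨
      v.1 = Subgroup.zpowers (DihedralGroup.r (1 : ZMod (p ^ 2))) ∨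
      v.1 = Subgroup.zpowers (DihedralGroup.r ((p : ℕ) : ZMod (p ^ 2)))}) :
    (∀ u ∈ K, ∀ v ∈ K, u ≠ v → (interGraph (DihedralGroup (p ^ 2))).Adj u v) ∧
    Nat.card K = p + 2 ∧
    (∀ T : Set (Vert (p ^ 2)),
      (∀ u ∈ T, ∀ v ∈ T, u ≠ v → (interGraph (DihedralGroup (p ^ 2))).Adj u v) →
        Nat.card T ≤ p + 2 ∧ (Nat.card T = p + 2 → T = K)) := by
  have hKdesc : K = insert (v1 hp) (insert (v2 hp)
      ((fun i : ℕ => vD hp ((i : ℕ) : ZMod (p ^ 2))) '' (Set.Icc 1 p))) := by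
    rw [hK]; ext v
    simp only [Set.mem_setOf_eq, Set.mem_insert_iff, Set.mem_image, Set.mem_Icc]
    constructor
    · rintro (⟨i, h1, h2, h3⟩ | h | h)
      · right; right
        exact ⟨i, ⟨h1, h2⟩, Subtype.ext ((closure_eq_dihSub _ _).symm.trans h3.symm)⟩
      · left; exact Subtype.ext h
      · right; left; exact Subtype.ext h
    · rintro (rfl | rfl | ⟨i, ⟨h1, h2⟩, rfl⟩)
      · right; left; rfl
      · right; right; rfl
      · left; exact ⟨i, h1, h2, (closure_eq_dihSub _ _).symm⟩
  have hinj : Set.InjOn (fun i : ℕ => vD hp ((i : ℕ) : ZMod (p ^ 2))) (Set.Icc 1 p) := by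
    intro i hi i' hi' h
    simp only [Set.mem_Icc] at hi hi'
    have h2 : dihSub (AddSubgroup.zmultiples ((p : ℕ) : ZMod (p ^ 2))) ((i : ℕ) : ZMod (p ^ 2)) =
        dihSub (AddSubgroup.zmultiples ((p : ℕ) : ZMod (p ^ 2))) ((i' : ℕ) : ZMod (p ^ 2)) :=
      congrArg Subtype.val h
    exact nat_eq_of_sub_memP hp hi.1 hi.2 hi'.1 hi'.2 (dihSub_eq_iff.1 h2)
  have hfin : ((fun i : ℕ => vD hp ((i : ℕ) : ZMod (p ^ 2))) '' (Set.Icc 1 p)).Finite :=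
    (Set.finite_Icc 1 p).image _
  have himg : ((fun i : ℕ => vD hp ((i : ℕ) : ZMod (p ^ 2))) '' (Set.Icc 1 p)).ncard = p := by
    rw [Set.ncard_image_of_injOn hinj, ← Finset.coe_Icc, Set.ncard_coe_finset, Nat.card_Icc]
    omega
  have hv2ni : v2 hp ∉ ((fun i : ℕ => vD hp ((i : ℕ) : ZMod (p ^ 2))) '' (Set.Icc 1 p)) := by
    rintro ⟨i, _, h⟩
    exact d3 _ (congrArg Subtype.val h).symm
  have hv1ni : v1 hp ∉ insert (v2 hp)
      ((fun i : ℕ => vD hp ((i : ℕ) : ZMod (p ^ 2))) '' (Set.Icc 1 p)) := by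
    rintro (h | ⟨i, _, h⟩)
    · exact d1 hp (congrArg Subtype.val h)
    · exact d2 hp _ (congrArg Subtype.val h).symm
  have hKcard : Nat.card K = p + 2 := by
    rw [Nat.card_coe_set_eq, hKdesc,
      Set.ncard_insert_of_notMem hv1ni (hfin.insert _),
      Set.ncard_insert_of_notMem hv2ni hfin, himg]
  have hKfin : K.Finite := by rw [hKdesc]; exact (hfin.insert _).insert _
  have hmem : ∀ w : Vert (p ^ 2), w ∈ K → r ((p : ℕ) : ZMod (p ^ 2)) ∈ w.1 := by
    rw [hK]
    rintro w (⟨i, _, _, h3⟩ | h | h)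
    · rw [h3]; exact subset_closure (Set.mem_insert _ _)
    · rw [h]; exact rp_mem_zpr1 hp
    · rw [h]; exact mem_zpowers _
  refine ⟨?_, hKcard, ?_⟩
  · intro u hu v hv huv
    show u ≠ v ∧ u.1 ⊓ v.1 ≠ ⊥
    refine ⟨huv, fun hbot => ?_⟩
    have hm : r ((p : ℕ) : ZMod (p ^ 2)) ∈ u.1 ⊓ v.1 :=
      mem_inf.2 ⟨hmem u hu, hmem v hv⟩
    rw [hbot, mem_bot] at hm
    exact rp_ne_one hp hm
  · intro T hT
    by_cases hrefl : ∃ v, v ∈ T ∧ ∃ j, v.1 = zpowers (sr j)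
    · obtain ⟨v, hvT, j, hvj⟩ := hrefl
      have hsub : T ⊆ {v, vD hp j} := by
        intro u huT
        by_cases huv : u = v
        · exact Or.inl huv
        · obtain ⟨hne, hbot⟩ := (hT u huT v hvT huv : u ≠ v ∧ u.1 ⊓ v.1 ≠ ⊥)
          have hsr : sr j ∈ u.1 := by
            obtain ⟨x, hx1⟩ := Subgroup.ne_bot_iff_exists_ne_one.mp hbot
            have hx2 : (x : DihedralGroup (p ^ 2)) ∈ v.1 := (mem_inf.1 x.2).2
            have hx3 : (x : DihedralGroup (p ^ 2)) ∈ u.1 := (mem_inf.1 x.2).1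
            have hx2' : (x : DihedralGroup (p ^ 2)) ∈ zpowers (sr j) := by
              rw [← hvj]; exact hx2
            rw [mem_zpowers_sr] at hx2'
            rcases hx2' with h1 | h2
            · exact absurd (Subtype.ext h1) hx1
            · rwa [h2] at hx3
          rcases classify hp u.1 u.2.1 u.2.2 with h | h | ⟨j', h⟩ | ⟨j', h⟩
          · rw [h] at hsr; exact absurd hsr (sr_not_mem_zpowers_r _ _)
          · rw [h] at hsr; exact absurd hsr (sr_not_mem_zpowers_r _ _)
          · right
            refine Subtype.ext ?_
            show u.1 = dihSub (AddSubgroup.zmultiples ((p : ℕ) : ZMod (p ^ 2))) j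
            rw [h] at hsr ⊢
            rw [mem_dihSub_sr] at hsr
            refine dihSub_eq_iff.2 ?_
            have := AddSubgroup.neg_mem _ hsr
            rwa [neg_sub] at this
          · rw [h, mem_zpowers_sr] at hsr
            rcases hsr with h1 | h1
            · exact absurd h1 (by simp [-r_zero, one_def])
            · simp only [sr.injEq] at h1
              exact absurd (Subtype.ext (by rw [h, hvj, h1])) huv
      have hT2 : Nat.card T ≤ 2 := by
        rw [Nat.card_coe_set_eq]
        calc T.ncard ≤ ({v, vD hp j} : Set (Vert (p ^ 2))).ncard :=
              Set.ncard_le_ncard hsub ((Set.finite_singleton _).insert _)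
          _ ≤ ({vD hp j} : Set (Vert (p ^ 2))).ncard + 1 := Set.ncard_insert_le _ _
          _ ≤ 2 := by rw [Set.ncard_singleton]
      have hp2 := hp.two_le
      exact ⟨by omega, fun h => by omega⟩
    · push_neg at hrefl
      have hsub : T ⊆ K := by
        intro u huT
        rcases classify hp u.1 u.2.1 u.2.2 with h | h | ⟨j, h⟩ | ⟨j, h⟩
        · rw [hK]; exact Or.inr (Or.inl h)
        · rw [hK]; exact Or.inr (Or.inr h)
        · obtain ⟨i, hi1, hi2, hieq⟩ := exists_canonical hp j
          rw [hK]; exact Or.inl ⟨i, hi1, hi2, by rw [h, hieq]⟩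
        · exact absurd h (hrefl u huT j)
      constructor
      · rw [← hKcard, Nat.card_coe_set_eq, Nat.card_coe_set_eq]
        exact Set.ncard_le_ncard hsub hKfin
      · intro hTcard
        refine Set.eq_of_subset_of_ncard_le hsub ?_ hKfin
        rw [← Nat.card_coe_set_eq, ← Nat.card_coe_set_eq, hTcard, hKcard]
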